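/- arXiv:2505.20628 — 4 statements merged into one kernel-verified Lean document; each statement's English description precedes it below -/
import Mathlib

section
/- Fix ε ∈ (0,1). If (x,y) ∈ D is feasible and f(x,y) = √(1−ε²), then x = arcsin ε and y = 0; that is, (arcsin ε, 0) is the unique global constrained minimizer of f subject to g ≤ ε over D. -/
/-!
With `t = 1 + y²`, the values `g = t sin x` and `f = t cos x` are the legs of a right triangle with
hypotenuse `t`, so `t² = g² + f² ≤ ε² + (1 - ε²) = 1` forces `y = 0`. Then
`cos x = √(1 - ε²) = cos (arcsin ε)`, and `cos` is injective on `[0, π]`.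
-/

open Real

theorem sq_le_one_of_mul_sin_le_of_mul_cos_eq_sqrt {t x ε : ℝ} (hs : 0 ≤ t * sin x)
    (hfeas : t * sin x ≤ ε) (hε : ε ≤ 1) (hval : t * cos x = √(1 - ε ^ 2)) : t ^ 2 ≤ 1 := by
  have hε_sq : ε ^ 2 ≤ 1 := pow_le_one₀ (hs.trans hfeas) hε
  calc t ^ 2 = (t * sin x) ^ 2 + (t * cos x) ^ 2 := by
        rw [mul_pow, mul_pow, ← mul_add, sin_sq_add_cos_sq, mul_one]
    _ ≤ ε ^ 2 + (1 - ε ^ 2) := by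
        rw [hval, sq_sqrt (by linarith)]
        gcongr
    _ = 1 := by ring

theorem eq_arcsin_of_cos_eq_sqrt {x ε : ℝ} (hε : 0 ≤ ε) (hx : x ∈ Set.Icc 0 π)
    (h : cos x = √(1 - ε ^ 2)) : x = arcsin ε :=
  injOn_cos hx ⟨arcsin_nonneg.2 hε, (arcsin_le_pi_div_two ε).trans (by linarith [pi_pos])⟩
    (h.trans (cos_arcsin ε).symm)

/-- For `f(x,y) = (1+y²)·cos x` and `g(x,y) = (1+y²)·sin x` on
`D = [0,π/2] × ℝ` with `ε ∈ (0,1)`: any feasible point of `D` whose objective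
value equals `√(1-ε²)` must be `(arcsin ε, 0)`; i.e. `(arcsin ε, 0)` is the
unique global constrained minimizer of `f` subject to `g ≤ ε`. -/
theorem concave2d_unique_min (ε : ℝ) (hε : ε ∈ Set.Ioo (0:ℝ) 1)
    (x y : ℝ) (hx : x ∈ Set.Icc 0 (π / 2))
    (hfeas : (1 + y ^ 2) * sin x ≤ ε)
    (hval : (1 + y ^ 2) * cos x = Real.sqrt (1 - ε ^ 2)) :
    x = arcsin ε ∧ y = 0 := by
  have hx' : x ∈ Set.Icc 0 π := ⟨hx.1, hx.2.trans (by linarith [pi_pos])⟩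
  have hs : 0 ≤ (1 + y ^ 2) * sin x := by
    have := sin_nonneg_of_nonneg_of_le_pi hx'.1 hx'.2
    positivity
  have ht := sq_le_one_of_mul_sin_le_of_mul_cos_eq_sqrt hs hfeas hε.2.le hval
  have hy : y = 0 := pow_eq_zero_iff two_ne_zero |>.mp <|
    le_antisymm (by nlinarith [sq_nonneg y]) (sq_nonneg y)
  subst hy
  rw [zero_pow two_ne_zero, add_zero, one_mul] at hval
  exact ⟨eq_arcsin_of_cos_eq_sqrt hε.1.le hx' hval, rfl⟩
end

section
/- For every c with 0 ≤ c < 1, the minimum of the penalized objective P_c over D = [0,π/2] × ℝ equals c and is attained at (π/2, 0): for all (x,y) ∈ D, P_c(x,y) ≥ c = P_c(π/2, 0). Moreover, for ε ∈ (0,1) the point (π/2, 0) is infeasible: g(π/2, 0) = 1 > ε, while f(π/2, 0) = 0. -/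
open Real

/-! On `[0, π/2]` we have `cos x + sin x ≥ 1`, so for `c ≤ 1` the slack `1 - sin x ≥ 0`
gives `cos x + c sin x - c = cos x - c (1 - sin x) ≥ cos x + sin x - 1 ≥ 0`. For `c ≥ 0` the
factor `cos x + c sin x` is then nonnegative, so multiplying by `1 + y² ≥ 1` only increases it. -/

lemma one_le_cos_add_sin {x : ℝ} (hx : x ∈ Set.Icc 0 (π / 2)) : 1 ≤ cos x + sin x := by
  have hsin : 0 ≤ sin x := sin_nonneg_of_nonneg_of_le_pi hx.1 (by linarith [hx.2, pi_pos])
  have hcos : 0 ≤ cos x := cos_nonneg_of_mem_Icc ⟨by linarith [hx.1, pi_pos], hx.2⟩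
  nlinarith [sin_sq_add_cos_sq x, mul_nonneg hsin hcos]

lemma le_cos_add_mul_sin {c x : ℝ} (hc : c ≤ 1) (hx : x ∈ Set.Icc 0 (π / 2)) :
    c ≤ cos x + c * sin x := by
  nlinarith [one_le_cos_add_sin hx, mul_le_mul_of_nonneg_right hc (sub_nonneg.2 (sin_le_one x))]

/-- For `0 ≤ c < 1`, the minimum of `P_c(x,y) = (1+y²)·(cos x + c·sin x)`
over `D = [0,π/2] × ℝ` equals `c`, attained at `(π/2,0)`; moreover for
`ε ∈ (0,1)` the point `(π/2,0)` is infeasible: `g(π/2,0) = 1 > ε`, while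
`f(π/2,0) = 0`. -/
theorem penalized_small_coeff (c : ℝ) (hc0 : 0 ≤ c) (hc1 : c < 1)
    (ε : ℝ) (hε : ε ∈ Set.Ioo (0:ℝ) 1) :
    (∀ x y : ℝ, x ∈ Set.Icc 0 (π / 2) →
      c ≤ (1 + y ^ 2) * (cos x + c * sin x)) ∧
    (1 + (0:ℝ) ^ 2) * (cos (π / 2) + c * sin (π / 2)) = c ∧
    (1 + (0:ℝ) ^ 2) * sin (π / 2) = 1 ∧ ε < 1 ∧
    (1 + (0:ℝ) ^ 2) * cos (π / 2) = 0 := by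
  refine ⟨fun x y hx => ?_, by simp, by simp, hε.2, by simp⟩
  have hc := le_cos_add_mul_sin hc1.le hx
  calc c ≤ cos x + c * sin x := hc
    _ ≤ (1 + y ^ 2) * (cos x + c * sin x) :=
      le_mul_of_one_le_left (hc0.trans hc) (le_add_of_nonneg_right (sq_nonneg y))
end

section
/- Fix ε ∈ (0,1). For every c ≥ 0, every global minimizer (x*,y*) of the penalized objective P_c over D = [0,π/2] × ℝ either is infeasible, i.e., g(x*,y*) ≥ 1 > ε, or satisfies f(x*,y*) = 1 > √(1−ε²). In particular, no choice of penalty coefficient c ≥ 0 makes a global minimizer of P_c coincide with a constrained minimizer of f subject to g ≤ ε, whose objective value is √(1−ε²). -/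
/-!
Write `a = cos x*`, `b = sin x*`, `t = 1 + y*²`; then `a, b ≥ 0`, `a² + b² = 1`, `t ≥ 1`, and testing
the minimality of `(x*, y*)` against `(0, 0)` and `(π/2, 0)` gives `t (a + c b) ≤ min 1 c`.
Since `a + b ≥ 1` on the quarter circle, `a + c b ≥ min 1 c` as well, so all these inequalities are
equalities. For `c < 1` this forces `a = 0`, i.e. `x* = π/2`; for `c ≥ 1` it forces `t = 1` and
`a + b = 1`, i.e. `x* ∈ {0, π/2}`. In every case `g(x*, y*) ≥ 1` or `f(x*, y*) = 1`.
-/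

open Real

section QuarterCircle

variable {a b : ℝ}

lemma one_le_add_of_sq_add_sq_eq_one (ha : 0 ≤ a) (hb : 0 ≤ b) (h : a ^ 2 + b ^ 2 = 1) :
    1 ≤ a + b := by
  nlinarith [mul_nonneg ha hb]

lemma eq_zero_or_eq_zero_of_add_eq_one_of_sq_add_sq_eq_one (h : a ^ 2 + b ^ 2 = 1)
    (hab : a + b = 1) : a = 0 ∨ b = 0 := by
  have : a * b = 0 := by linear_combination (a + b + 1) / 2 * hab - h / 2
  exact mul_eq_zero.mp this

lemma penalty_minimizer_alternative {t c : ℝ} (ha : 0 ≤ a) (hb : 0 ≤ b)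
    (h : a ^ 2 + b ^ 2 = 1) (ht : 1 ≤ t) (hc : 0 ≤ c)
    (hle_one : t * (a + c * b) ≤ 1) (hle_c : t * (a + c * b) ≤ c) :
    1 ≤ t * b ∨ t * a = 1 := by
  have hab := one_le_add_of_sq_add_sq_eq_one ha hb h
  have hP_le : a + c * b ≤ t * (a + c * b) := le_mul_of_one_le_left (by positivity) ht
  rcases lt_or_ge c 1 with hc1 | hc1
  · have ha0 : a = 0 := by
      nlinarith [mul_nonneg hc (sub_nonneg.mpr hab), mul_nonneg (sub_nonneg.mpr hc1.le) ha]
    have hb1 : b = 1 := by nlinarith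
    left
    simpa [hb1] using ht
  · have hP : a + c * b = 1 := by nlinarith
    have ht1 : t = 1 := by nlinarith
    rcases eq_zero_or_eq_zero_of_add_eq_one_of_sq_add_sq_eq_one h (by nlinarith) with ha0 | hb0
    · left
      nlinarith
    · right
      nlinarith

end QuarterCircle

/-- **Failure of the penalized approach.** Fix `ε ∈ (0,1)`. For every `c ≥ 0`,
every global minimizer `(x*,y*)` of `P_c(x,y) = (1+y²)·(cos x + c·sin x)` over
`D = [0,π/2] × ℝ` either is infeasible, with `g(x*,y*) ≥ 1 > ε`, or satisfies
`f(x*,y*) = 1 > √(1-ε²)`; in particular it never coincides with a constrained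
minimizer of `f` subject to `g ≤ ε`, whose objective value is `√(1-ε²)`. -/
theorem penalized_failure (ε : ℝ) (hε : ε ∈ Set.Ioo (0:ℝ) 1)
    (c : ℝ) (hc : 0 ≤ c)
    (xstar ystar : ℝ) (hx : xstar ∈ Set.Icc 0 (π / 2))
    (hmin : ∀ x y : ℝ, x ∈ Set.Icc 0 (π / 2) →
      (1 + ystar ^ 2) * (cos xstar + c * sin xstar) ≤
        (1 + y ^ 2) * (cos x + c * sin x)) :
    ((1 + ystar ^ 2) * sin xstar ≥ 1 ∧ 1 > ε) ∨
    ((1 + ystar ^ 2) * cos xstar = 1 ∧ 1 > Real.sqrt (1 - ε ^ 2)) := by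
  obtain ⟨hε0, hε1⟩ := hε
  have hcos : 0 ≤ cos xstar := cos_nonneg_of_mem_Icc ⟨by linarith [pi_pos, hx.1], hx.2⟩
  have hsin : 0 ≤ sin xstar := sin_nonneg_of_nonneg_of_le_pi hx.1 (by linarith [pi_pos, hx.2])
  have hle_one := hmin 0 0 ⟨le_rfl, by positivity⟩
  have hle_c := hmin (π / 2) 0 ⟨by positivity, le_rfl⟩
  simp only [cos_zero, sin_zero, cos_pi_div_two, sin_pi_div_two] at hle_one hle_c
  norm_num at hle_one hle_c
  have hsqrt : sqrt (1 - ε ^ 2) < 1 := (sqrt_lt' one_pos).mpr (by nlinarith)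
  rcases penalty_minimizer_alternative hcos hsin (cos_sq_add_sin_sq xstar)
      (le_add_of_nonneg_right (sq_nonneg ystar)) hc hle_one hle_c with h | h
  · exact Or.inl ⟨h, hε1⟩
  · exact Or.inr ⟨h, hsqrt⟩
end

section
/- Fix ε ∈ (0,1). For every c ≥ 0 — including the optimal Lagrange multiplier value c = ε/√(1−ε²) — the constrained minimizer (arcsin ε, 0) is not a global minimizer of the penalized objective P_c over D = [0,π/2] × ℝ: there exists (x,y) ∈ D with P_c(x,y) < P_c(arcsin ε, 0). -/
/-!
Taking `y = 0`, it suffices that `cos x + c sin x` has no minimum over `[0, π/2]` at the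
interior point `arcsin ε`. Indeed at every interior point `cos x + sin x > 1`, which puts
`cos x + c sin x` strictly above `min 1 c`, the smaller of its two endpoint values.
-/

open Real

theorem one_lt_cos_add_sin {x : ℝ} (h0 : 0 < x) (h1 : x < π / 2) : 1 < cos x + sin x := by
  have hsin : 0 < sin x := sin_pos_of_pos_of_lt_pi h0 (by linarith)
  have hcos : 0 < cos x := cos_pos_of_mem_Ioo ⟨by linarith, h1⟩
  nlinarith [sin_sq_add_cos_sq x, mul_pos hsin hcos]

theorem min_one_lt_cos_add_mul_sin {x : ℝ} (h0 : 0 < x) (h1 : x < π / 2) (c : ℝ) :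
    min 1 c < cos x + c * sin x := by
  have hsum := one_lt_cos_add_sin h0 h1
  rcases le_total 1 c with hc | hc
  · rw [min_eq_left hc]
    nlinarith [sin_pos_of_pos_of_lt_pi h0 (by linarith : x < π)]
  · rw [min_eq_right hc]
    nlinarith [mul_nonneg (sub_nonneg.mpr hc) (sub_nonneg.mpr (sin_le_one x))]

theorem exists_cos_add_mul_sin_lt {θ : ℝ} (h0 : 0 < θ) (h1 : θ < π / 2) (c : ℝ) :
    ∃ x ∈ Set.Icc 0 (π / 2), cos x + c * sin x < cos θ + c * sin θ := by
  have hlt := min_one_lt_cos_add_mul_sin h0 h1 c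
  rcases le_total 1 c with hc | hc
  · exact ⟨0, ⟨le_rfl, by positivity⟩, by simpa [min_eq_left hc] using hlt⟩
  · exact ⟨π / 2, ⟨by positivity, le_rfl⟩, by simpa [min_eq_right hc] using hlt⟩

theorem penalized_misses_constrained_min_general (ε : ℝ) (hε : ε ∈ Set.Ioo (0:ℝ) 1)
    (c : ℝ) :
    ∃ x y : ℝ, x ∈ Set.Icc 0 (π / 2) ∧
      (1 + y ^ 2) * (cos x + c * sin x) <
        (1 + (0:ℝ) ^ 2) * (cos (arcsin ε) + c * sin (arcsin ε)) := by
  obtain ⟨x, hx, hlt⟩ := exists_cos_add_mul_sin_lt (arcsin_pos.mpr hε.1)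
    (arcsin_lt_pi_div_two.mpr hε.2) c
  exact ⟨x, 0, hx, by simpa using hlt⟩

/-- Fix `ε ∈ (0,1)`. For every `c ≥ 0`—including the optimal multiplier
`c = ε/√(1-ε²)`—the constrained minimizer `(arcsin ε, 0)` is not a global
minimizer of `P_c(x,y) = (1+y²)·(cos x + c·sin x)` over `D = [0,π/2] × ℝ`:
some point of `D` has strictly smaller penalized objective value. -/
theorem penalized_misses_constrained_min (ε : ℝ) (hε : ε ∈ Set.Ioo (0:ℝ) 1)
    (c : ℝ) (hc : 0 ≤ c) :
    ∃ x y : ℝ, x ∈ Set.Icc 0 (π / 2) ∧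
      (1 + y ^ 2) * (cos x + c * sin x) <
        (1 + (0:ℝ) ^ 2) * (cos (arcsin ε) + c * sin (arcsin ε)) :=
  penalized_misses_constrained_min_general ε hε c
end
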